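/- (Theorem 1, ergodic bound.) Under the stated setup, for every α* ∈ ℝⁿ with Z·α* = 0, every ω* ∈ ℝ^p, and every natural number T ≥ 2d+1: (T+1)·(Φ(ᾱ(T+1)) − Φ(α*) + 2‖ω*‖·‖Z·ᾱ(T+1)‖) ≤ 4(1+d)·λ_max(S⁻¹)·‖ω*‖² + (1+d)·ω(0)ᵀS⁻¹ω(0) + ½·(α* − α(0))ᵀC⁻¹(α* − α(0)) + Γ/2. -/

import Mathlib

/-!
Each iteration is a proximal gradient step on `Φ = Hs + Hr` whose gradient is perturbed by the
delayed dual term `Zᵀ ω(t-d) + ZᵀSZ α(t-d)`. Fix `α*` with `Z α* = 0` and a dual point `w`. The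
first-order optimality of the prox step, the subgradient and smoothness inequalities for `Hs`,
and completing the square in the dual update bound `Φ(α(t+1)) - Φ(α*) + ⟨Z α(t+1), w⟩` by a
telescoping primal distance, a `d`-delayed telescoping dual distance, and
`½ (‖Δₜ‖²_H - ‖Δₜ‖²_{C⁻¹} + ‖α(t+1) - α(t-d)‖²_{ZᵀSZ})` with `Δₜ = α(t+1) - α t`.
Since `α(t+1) - α(t-d)` is a sum of at most `d+1` increments and each increment lies in at most
`d+1` such windows, the last terms sum to at most
`½ Σ (‖Δₜ‖²_H - ‖Δₜ‖²_{C⁻¹} + (1+d)² ‖Δₜ‖²_{ZᵀSZ})`, which the step-size condition makes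
nonpositive. Summing over `t ≤ T`, Jensen's inequality for the
convex `Φ` at the ergodic average, and the choice of `w` of norm `2‖ω*‖` aligned with `Z ᾱ` give
the bound.
-/

open Matrix Finset

/-- The quadratic form `‖x‖²_A = xᵀ A x`. -/
noncomputable def qf {k : ℕ} (A : Matrix (Fin k) (Fin k) ℝ) (x : Fin k → ℝ) : ℝ :=
  x ⬝ᵥ (A *ᵥ x)

/-- The largest eigenvalue of a real symmetric matrix, as the supremum of the
quadratic form over Euclidean unit vectors. -/
noncomputable def lamMax {k : ℕ} (A : Matrix (Fin k) (Fin k) ℝ) : ℝ :=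
  sSup {r : ℝ | ∃ x : Fin k → ℝ, x ⬝ᵥ x = 1 ∧ r = x ⬝ᵥ (A *ᵥ x)}

section MatrixFacts

variable {ι κ : Type*} {A : Matrix ι ι ℝ}

lemma Matrix.IsSymm.dotProduct_mulVec_comm [Fintype ι] (hA : A.IsSymm) (x y : ι → ℝ) :
    x ⬝ᵥ (A *ᵥ y) = y ⬝ᵥ (A *ᵥ x) := by
  simpa only [hA.eq] using dotProduct_transpose_mulVec A x y

lemma Matrix.PosSemidef.isSymm (hA : A.PosSemidef) : A.IsSymm :=
  isHermitian_iff_isSymm.mp hA.isHermitian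

lemma Matrix.PosSemidef.transpose_mul_mul_same [Fintype ι] [Fintype κ] (hA : A.PosSemidef)
    (Z : Matrix ι κ ℝ) : (Zᵀ * A * Z).PosSemidef := by
  simpa using hA.conjTranspose_mul_mul_same Z

lemma Matrix.PosDef.inv_mulVec_mulVec [Fintype ι] [DecidableEq ι] (hA : A.PosDef) (x : ι → ℝ) :
    A⁻¹ *ᵥ (A *ᵥ x) = x := by
  rw [mulVec_mulVec, nonsing_inv_mul _ ((isUnit_iff_isUnit_det _).mp hA.isUnit), one_mulVec]

end MatrixFacts

section QuadraticForm

variable {k m : ℕ} {A : Matrix (Fin k) (Fin k) ℝ}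

lemma qf_add (hA : A.IsSymm) (x y : Fin k → ℝ) :
    qf A (x + y) = qf A x + 2 * (x ⬝ᵥ (A *ᵥ y)) + qf A y := by
  simp only [qf, mulVec_add, dotProduct_add, add_dotProduct, hA.dotProduct_mulVec_comm y x]
  ring

lemma qf_sub (hA : A.IsSymm) (x y : Fin k → ℝ) :
    qf A (x - y) = qf A x - 2 * (x ⬝ᵥ (A *ᵥ y)) + qf A y := by
  simp only [qf, mulVec_sub, dotProduct_sub, sub_dotProduct, hA.dotProduct_mulVec_comm y x]
  ring

lemma qf_smul (c : ℝ) (x : Fin k → ℝ) : qf A (c • x) = c ^ 2 * qf A x := by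
  simp only [qf, mulVec_smul, smul_dotProduct, dotProduct_smul, smul_eq_mul]
  ring

lemma qf_transpose_mul_mul (Z : Matrix (Fin m) (Fin k) ℝ) (S : Matrix (Fin m) (Fin m) ℝ)
    (x : Fin k → ℝ) : qf (Zᵀ * S * Z) x = qf S (Z *ᵥ x) := by
  rw [qf, qf, ← mulVec_mulVec, ← mulVec_mulVec, dotProduct_transpose_mulVec, dotProduct_comm]

lemma Matrix.PosSemidef.qf_nonneg (hA : A.PosSemidef) (x : Fin k → ℝ) : 0 ≤ qf A x := by
  simpa [qf] using hA.dotProduct_mulVec_nonneg x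

lemma Matrix.PosSemidef.qf_sub_le (hA : A.PosSemidef) (x y : Fin k → ℝ) :
    qf A (x - y) ≤ 2 * qf A x + 2 * qf A y := by
  have := hA.qf_nonneg (x + y)
  rw [qf_add hA.isSymm] at this
  rw [qf_sub hA.isSymm]
  linarith

lemma Matrix.PosSemidef.qf_sum_le (hA : A.PosSemidef) {ι : Type*} (s : Finset ι)
    (v : ι → Fin k → ℝ) : qf A (∑ i ∈ s, v i) ≤ #s * ∑ i ∈ s, qf A (v i) := by
  have hcross : ∀ i j, v i ⬝ᵥ (A *ᵥ v j) ≤ (qf A (v i) + qf A (v j)) / 2 := fun i j => by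
    have := hA.qf_nonneg (v i - v j)
    rw [qf_sub hA.isSymm] at this
    linarith
  calc qf A (∑ i ∈ s, v i) = ∑ i ∈ s, ∑ j ∈ s, v i ⬝ᵥ (A *ᵥ v j) := by
        simp only [qf, mulVec_sum, sum_dotProduct, dotProduct_sum]
        exact sum_comm
    _ ≤ ∑ i ∈ s, ∑ j ∈ s, (qf A (v i) + qf A (v j)) / 2 := by
        gcongr with i _ j _
        exact hcross i j
    _ = #s * ∑ i ∈ s, qf A (v i) := by
        simp only [add_div, sum_add_distrib, sum_const, nsmul_eq_mul, ← mul_sum, ← sum_div]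
        ring

lemma bddAbove_lamMax_set (A : Matrix (Fin k) (Fin k) ℝ) :
    BddAbove {r : ℝ | ∃ x : Fin k → ℝ, x ⬝ᵥ x = 1 ∧ r = x ⬝ᵥ (A *ᵥ x)} := by
  refine ⟨∑ i, ∑ j, |A i j|, ?_⟩
  rintro _ ⟨x, hx, rfl⟩
  have hunit : ∀ i, |x i| ≤ 1 := fun i => by
    have : x i * x i ≤ x ⬝ᵥ x :=
      single_le_sum (f := fun i => x i * x i) (fun i _ => mul_self_nonneg _) (mem_univ i)
    exact abs_le_one_iff_mul_self_le_one.mpr (hx ▸ this)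
  calc x ⬝ᵥ (A *ᵥ x) = ∑ i, ∑ j, x i * A i j * x j := by
        simp only [dotProduct, mulVec, mul_sum, mul_assoc]
    _ ≤ ∑ i, ∑ j, |A i j| := by
        gcongr with i _ j _
        calc x i * A i j * x j ≤ |x i| * |A i j| * |x j| := by
              rw [← abs_mul, ← abs_mul]; exact le_abs_self _
          _ ≤ 1 * |A i j| * 1 := by gcongr <;> exact hunit _
          _ = |A i j| := by ring

lemma qf_le_lamMax_mul (A : Matrix (Fin k) (Fin k) ℝ) (x : Fin k → ℝ) :
    qf A x ≤ lamMax A * (x ⬝ᵥ x) := by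
  rcases eq_or_ne x 0 with rfl | hx
  · simp [qf]
  have hxx : 0 < x ⬝ᵥ x := by simpa using dotProduct_star_self_pos_iff.mpr hx
  set c := √(x ⬝ᵥ x)
  have hc : c ^ 2 = x ⬝ᵥ x := Real.sq_sqrt hxx.le
  have hc0 : c ≠ 0 := (Real.sqrt_pos.mpr hxx).ne'
  have hunit : (c⁻¹ • x) ⬝ᵥ (c⁻¹ • x) = 1 := by
    rw [smul_dotProduct, dotProduct_smul, smul_eq_mul, smul_eq_mul, ← hc]
    field_simp
  have hle : qf A (c⁻¹ • x) ≤ lamMax A := le_csSup (bddAbove_lamMax_set A) ⟨_, hunit, rfl⟩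
  rw [qf_smul, inv_pow, hc, inv_mul_le_iff₀ hxx] at hle
  linarith

lemma Matrix.PosSemidef.lamMax_nonneg (hA : A.PosSemidef) : 0 ≤ lamMax A :=
  Real.sSup_nonneg fun _ ⟨x, _, hr⟩ => hr ▸ hA.qf_nonneg x

lemma exists_dotProduct_self_le_and_dotProduct_eq (u : Fin k → ℝ) (r : ℝ) :
    ∃ w : Fin k → ℝ, w ⬝ᵥ w ≤ r ^ 2 ∧ w ⬝ᵥ u = r * √(u ⬝ᵥ u) := by
  have hu : 0 ≤ u ⬝ᵥ u := by simpa using dotProduct_star_self_nonneg u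
  refine ⟨(r / √(u ⬝ᵥ u)) • u, ?_, ?_⟩
  · rw [smul_dotProduct, dotProduct_smul, smul_eq_mul, smul_eq_mul, ← mul_assoc, ← sq, div_pow,
      Real.sq_sqrt hu, div_mul_eq_mul_div, mul_div_assoc]
    exact mul_le_of_le_one_right (sq_nonneg r) (div_self_le_one _)
  · rw [smul_dotProduct, smul_eq_mul, div_mul_eq_mul_div, mul_div_assoc, Real.div_sqrt]

end QuadraticForm

section Convex

variable {k : ℕ}

lemma convexOn_univ_of_subgradient {f : (Fin k → ℝ) → ℝ} {g : (Fin k → ℝ) → Fin k → ℝ}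
    (hg : ∀ a b, f a + g a ⬝ᵥ (b - a) ≤ f b) : ConvexOn ℝ Set.univ f := by
  refine ⟨convex_univ, fun x _ y _ a b ha hb hab => ?_⟩
  have hbalance : a • (x - (a • x + b • y)) + b • (y - (a • x + b • y)) = 0 := by
    linear_combination (norm := module) -(hab • (a • x + b • y))
  have hx := mul_le_mul_of_nonneg_left (hg (a • x + b • y) x) ha
  have hy := mul_le_mul_of_nonneg_left (hg (a • x + b • y) y) hb
  have hzero := congrArg (g (a • x + b • y) ⬝ᵥ ·) hbalance
  simp only [dotProduct_add, dotProduct_smul, smul_eq_mul, dotProduct_zero] at hzero ⊢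
  rw [mul_add] at hx hy
  have hsplit : f (a • x + b • y) = a * f (a • x + b • y) + b * f (a • x + b • y) := by
    rw [← add_mul, hab, one_mul]
  linarith

lemma ConvexOn.card_mul_map_avg_le {E : Type*} [AddCommGroup E] [Module ℝ E] {f : E → ℝ}
    (hf : ConvexOn ℝ Set.univ f) {ι : Type*} {s : Finset ι} (hs : s.Nonempty) (x : ι → E) :
    #s * f ((#s : ℝ)⁻¹ • ∑ i ∈ s, x i) ≤ ∑ i ∈ s, f (x i) := by
  have hcard : (0 : ℝ) < #s := by exact_mod_cast hs.card_pos
  have := hf.map_sum_le (t := s) (w := fun _ => (#s : ℝ)⁻¹) (p := x)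
    (fun _ _ => by positivity) (by simp [hcard.ne']) (fun _ _ => Set.mem_univ _)
  simp only [← smul_sum, smul_eq_mul] at this
  rw [← mul_sum] at this
  exact (le_inv_mul_iff₀ hcard).mp this

lemma ConvexOn.le_of_isMinOn_add_qf {f : (Fin k → ℝ) → ℝ} (hf : ConvexOn ℝ Set.univ f)
    {A : Matrix (Fin k) (Fin k) ℝ} (hA : A.PosSemidef) {y a : Fin k → ℝ}
    (hmin : IsMinOn (fun v => f v + 1 / 2 * qf A (v - y)) Set.univ a) (v : Fin k → ℝ) :
    f a ≤ f v + (a - y) ⬝ᵥ (A *ᵥ (v - a)) := by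
  set B := (a - y) ⬝ᵥ (A *ᵥ (v - a))
  set c := qf A (v - a)
  have hc : 0 ≤ c := hA.qf_nonneg _
  -- test minimality at `(1 - θ) • a + θ • v` and let `θ → 0`
  have hsegment : ∀ θ : ℝ, 0 < θ → θ ≤ 1 → f a - f v ≤ B + θ * (c / 2) := by
    intro θ hθ hθ1
    have hmid := isMinOn_univ_iff.mp hmin ((1 - θ) • a + θ • v)
    have hconv := hf.2 (Set.mem_univ a) (Set.mem_univ v) (show 0 ≤ 1 - θ by linarith) hθ.le
      (sub_add_cancel 1 θ)
    have hpt : (1 - θ) • a + θ • v - y = (a - y) + θ • (v - a) := by module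
    rw [hpt, qf_add hA.isSymm, qf_smul, mulVec_smul, dotProduct_smul, smul_eq_mul] at hmid
    simp only [smul_eq_mul] at hconv
    have : θ * (f a - f v) ≤ θ * (B + θ * (c / 2)) := by linarith
    exact le_of_mul_le_mul_left this hθ
  refine le_of_forall_pos_le_add fun ε hε => ?_
  have hθ : 0 < ε / (c + ε) := by positivity
  have hθ1 : ε / (c + ε) ≤ 1 := div_le_one_of_le₀ (by linarith) (by positivity)
  have hsmall : ε / (c + ε) * (c / 2) ≤ ε := by
    rw [div_mul_eq_mul_div, div_le_iff₀ (by positivity)]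
    nlinarith
  linarith [hsegment _ hθ hθ1]

end Convex

section Step

variable {n p : ℕ} {C H : Matrix (Fin n) (Fin n) ℝ} {fs fr : (Fin n → ℝ) → ℝ}
  {gs : (Fin n → ℝ) → Fin n → ℝ}

lemma prox_grad_step_le (hC : C.PosDef)
    (hconv : ∀ a b, fs a + gs a ⬝ᵥ (b - a) ≤ fs b)
    (hsmooth : ∀ a b, fs b ≤ fs a + gs a ⬝ᵥ (b - a) + 1 / 2 * qf H (b - a))
    (hfr : ConvexOn ℝ Set.univ fr) {a a' h : Fin n → ℝ}
    (hmin : IsMinOn (fun v => fr v + 1 / 2 * qf C⁻¹ (v - (a - C *ᵥ (gs a + h)))) Set.univ a')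
    (x : Fin n → ℝ) :
    fs a' + fr a' - (fs x + fr x)
      ≤ 1 / 2 * qf H (a' - a) - 1 / 2 * qf C⁻¹ (a' - a)
        + (1 / 2 * qf C⁻¹ (x - a) - 1 / 2 * qf C⁻¹ (x - a')) + h ⬝ᵥ (x - a') := by
  have hCi := hC.inv.posSemidef
  have hopt := hfr.le_of_isMinOn_add_qf hCi hmin x
  have hres : C⁻¹ *ᵥ (a' - (a - C *ᵥ (gs a + h))) = C⁻¹ *ᵥ (a' - a) + (gs a + h) := by
    rw [show a' - (a - C *ᵥ (gs a + h)) = (a' - a) + C *ᵥ (gs a + h) by abel, mulVec_add,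
      hC.inv_mulVec_mulVec]
  rw [hCi.isSymm.dotProduct_mulVec_comm, hres] at hopt
  have hthree := qf_add hCi.isSymm (x - a') (a' - a)
  rw [sub_add_sub_cancel] at hthree
  have hgrad : (x - a') ⬝ᵥ gs a = gs a ⬝ᵥ (x - a) - gs a ⬝ᵥ (a' - a) := by
    rw [dotProduct_comm, ← dotProduct_sub, sub_sub_sub_cancel_right]
  simp only [dotProduct_add, dotProduct_comm (x - a') h] at hopt
  linarith [hconv a x, hsmooth a a']

lemma dual_update_identity {S : Matrix (Fin p) (Fin p) ℝ} (hS : S.PosDef)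
    (u v w w' : Fin p → ℝ) :
    u ⬝ᵥ (w' - (w + S *ᵥ v))
      = 1 / 2 * qf S⁻¹ (w - w') - 1 / 2 * qf S⁻¹ (w + S *ᵥ u - w')
        + 1 / 2 * qf S (u - v) - 1 / 2 * qf S v := by
  have hSu : qf S⁻¹ (S *ᵥ u) = qf S u := by
    rw [qf, hS.inv_mulVec_mulVec, qf, dotProduct_comm]
  rw [show w + S *ᵥ u - w' = (w - w') + S *ᵥ u by abel, qf_add hS.inv.posSemidef.isSymm,
    hS.inv_mulVec_mulVec, hSu, qf_sub hS.posSemidef.isSymm]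
  simp only [dotProduct_sub, dotProduct_add, sub_dotProduct, dotProduct_comm w u,
    dotProduct_comm w' u]
  ring

end Step

section DelayedSums

lemma sum_range_sub_delayed_le {E : ℕ → ℝ} (hE : ∀ s, 0 ≤ E s) (d N : ℕ) :
    ∑ t ∈ range N, (E (t - d) - E (t + 1)) ≤ (1 + d) * E 0 := by
  have hdelay : ∑ t ∈ range N, E (t - d) ≤ d * E 0 + ∑ s ∈ range N, E s :=
    calc ∑ t ∈ range N, E (t - d) ≤ ∑ t ∈ range (d + N), E (t - d) :=
          sum_le_sum_of_subset_of_nonneg (range_subset_range.mpr (by omega)) fun _ _ _ => hE _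
      _ = d * E 0 + ∑ s ∈ range N, E s := by
          rw [sum_range_add, sum_congr rfl fun t ht => by
            rw [Nat.sub_eq_zero_of_le (mem_range.mp ht).le]]
          simp
  have hshift : ∑ s ∈ range N, E s ≤ ∑ t ∈ range N, E (t + 1) + E 0 := by
    rw [← sum_range_succ']
    exact sum_le_sum_of_subset_of_nonneg (range_subset_range.mpr N.le_succ) fun _ _ _ => hE _
  rw [sum_sub_distrib]
  linarith

lemma sum_sum_Ico_sub_le {q : ℕ → ℝ} (hq : ∀ s, 0 ≤ q s) (d N : ℕ) :
    ∑ t ∈ range N, ∑ s ∈ Ico (t - d) (t + 1), q s ≤ (1 + d) * ∑ s ∈ range N, q s := by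
  rw [sum_comm' (t' := range N) (s' := fun s => Ico s (min (s + d + 1) N))
    fun t s => by simp only [mem_range, mem_Ico]; omega, mul_sum]
  gcongr with s
  rw [sum_const, nsmul_eq_mul, Nat.card_Ico]
  gcongr
  · exact hq s
  · exact_mod_cast (by omega : min (s + d + 1) N - s ≤ 1 + d)

lemma Matrix.PosSemidef.sum_qf_sub_delayed_le {k : ℕ} {M : Matrix (Fin k) (Fin k) ℝ}
    (hM : M.PosSemidef) (x : ℕ → Fin k → ℝ) (d N : ℕ) :
    ∑ t ∈ range N, qf M (x (t + 1) - x (t - d))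
      ≤ (1 + d) ^ 2 * ∑ t ∈ range N, qf M (x (t + 1) - x t) := by
  have hwindow : ∀ t, qf M (x (t + 1) - x (t - d))
      ≤ (1 + d) * ∑ s ∈ Ico (t - d) (t + 1), qf M (x (s + 1) - x s) := fun t => by
    rw [← sum_Ico_sub x (by omega : t - d ≤ t + 1)]
    refine (hM.qf_sum_le _ _).trans ?_
    gcongr
    · exact sum_nonneg fun s _ => hM.qf_nonneg _
    · rw [Nat.card_Ico]
      exact_mod_cast (by omega : t + 1 - (t - d) ≤ 1 + d)
  calc ∑ t ∈ range N, qf M (x (t + 1) - x (t - d))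
      ≤ (1 + d) * ∑ t ∈ range N, ∑ s ∈ Ico (t - d) (t + 1), qf M (x (s + 1) - x s) := by
        rw [mul_sum]
        exact sum_le_sum fun t _ => hwindow t
    _ ≤ (1 + d) * ((1 + d) * ∑ t ∈ range N, qf M (x (t + 1) - x t)) := by
        gcongr
        exact sum_sum_Ico_sub_le (fun s => hM.qf_nonneg _) d N
    _ = (1 + d) ^ 2 * ∑ t ∈ range N, qf M (x (t + 1) - x t) := by ring

end DelayedSums

section Algorithm

variable {n p : ℕ} {C H : Matrix (Fin n) (Fin n) ℝ} {S : Matrix (Fin p) (Fin p) ℝ}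
  {fs fr : (Fin n → ℝ) → ℝ} {gs : (Fin n → ℝ) → Fin n → ℝ}

lemma ddpg_step_le (Z : Matrix (Fin p) (Fin n) ℝ) (hC : C.PosDef) (hS : S.PosDef)
    (hconv : ∀ a b, fs a + gs a ⬝ᵥ (b - a) ≤ fs b)
    (hsmooth : ∀ a b, fs b ≤ fs a + gs a ⬝ᵥ (b - a) + 1 / 2 * qf H (b - a))
    (hfr : ConvexOn ℝ Set.univ fr) {a a' aL : Fin n → ℝ} {w : Fin p → ℝ}
    (hmin : IsMinOn (fun v => fr v + 1 / 2 * qf C⁻¹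
      (v - (a - C *ᵥ (gs a + Zᵀ *ᵥ w + (Zᵀ * S * Z) *ᵥ aL)))) Set.univ a')
    {xs : Fin n → ℝ} (hxs : Z *ᵥ xs = 0) (w' : Fin p → ℝ) :
    fs a' + fr a' - (fs xs + fr xs) + (Z *ᵥ a') ⬝ᵥ w'
      ≤ 1 / 2 * (qf H (a' - a) - qf C⁻¹ (a' - a) + qf (Zᵀ * S * Z) (a' - aL))
        + (1 / 2 * qf C⁻¹ (xs - a) - 1 / 2 * qf C⁻¹ (xs - a'))
        + (1 / 2 * qf S⁻¹ (w - w') - 1 / 2 * qf S⁻¹ (w + (S * Z) *ᵥ a' - w')) := by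
  have hprimal := prox_grad_step_le (h := Zᵀ *ᵥ w + (Zᵀ * S * Z) *ᵥ aL) hC hconv hsmooth hfr
    (by simpa only [add_assoc] using hmin) xs
  have hcoupling : (Zᵀ *ᵥ w + (Zᵀ * S * Z) *ᵥ aL) ⬝ᵥ (xs - a')
      = -((Z *ᵥ a') ⬝ᵥ (w + S *ᵥ (Z *ᵥ aL))) := by
    rw [← mulVec_mulVec, ← mulVec_mulVec, ← mulVec_add, dotProduct_comm,
      dotProduct_transpose_mulVec, mulVec_sub, hxs, zero_sub, dotProduct_neg, dotProduct_comm]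
  have hdual := dual_update_identity hS (Z *ᵥ a') (Z *ᵥ aL) w w'
  rw [← mulVec_sub, ← qf_transpose_mul_mul, ← qf_transpose_mul_mul, dotProduct_sub] at hdual
  have hdelayed := (hS.posSemidef.transpose_mul_mul_same Z).qf_nonneg aL
  rw [← mulVec_mulVec]
  linarith

lemma ddpg_sum_le (Z : Matrix (Fin p) (Fin n) ℝ) (hC : C.PosDef) (hS : S.PosDef) {d : ℕ}
    (hconv : ∀ a b, fs a + gs a ⬝ᵥ (b - a) ≤ fs b)
    (hsmooth : ∀ a b, fs b ≤ fs a + gs a ⬝ᵥ (b - a) + 1 / 2 * qf H (b - a))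
    (hfr : ConvexOn ℝ Set.univ fr) {α : ℕ → Fin n → ℝ} {ω : ℕ → Fin p → ℝ}
    (hα : ∀ t v, fr (α (t + 1)) + 1 / 2 * qf C⁻¹ (α (t + 1) -
          (α t - C *ᵥ (gs (α t) + Zᵀ *ᵥ ω (t - d) + (Zᵀ * S * Z) *ᵥ α (t - d))))
        ≤ fr v + 1 / 2 * qf C⁻¹ (v -
          (α t - C *ᵥ (gs (α t) + Zᵀ *ᵥ ω (t - d) + (Zᵀ * S * Z) *ᵥ α (t - d)))))
    (hω : ∀ t, ω (t + 1) = ω (t - d) + (S * Z) *ᵥ α (t + 1))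
    (hstep : (C⁻¹ - H - Zᵀ * ((1 + d : ℝ) ^ 2 • S) * Z).PosSemidef)
    {xs : Fin n → ℝ} (hxs : Z *ᵥ xs = 0) (w' : Fin p → ℝ) (N : ℕ) :
    ∑ t ∈ range N, (fs (α (t + 1)) + fr (α (t + 1)) - (fs xs + fr xs)
        + (Z *ᵥ α (t + 1)) ⬝ᵥ w')
      ≤ 1 / 2 * qf C⁻¹ (xs - α 0) + (1 + d) * (1 / 2 * qf S⁻¹ (ω 0 - w')) := by
  have hM := hS.posSemidef.transpose_mul_mul_same Z
  have hiter := fun t => by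
    simpa only [← hω t] using
      ddpg_step_le Z hC hS hconv hsmooth hfr (isMinOn_univ_iff.mpr (hα t)) hxs w'
  have hstep_le : ∀ x, qf H x - qf C⁻¹ x + (1 + d) ^ 2 * qf (Zᵀ * S * Z) x ≤ 0 := fun x => by
    have := hstep.qf_nonneg x
    rw [Matrix.mul_smul, Matrix.smul_mul] at this
    simp only [qf, sub_mulVec, smul_mulVec, dotProduct_sub, dotProduct_smul, smul_eq_mul] at this ⊢
    linarith
  have hdescent : ∑ t ∈ range N, 1 / 2 * (qf H (α (t + 1) - α t) - qf C⁻¹ (α (t + 1) - α t)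
      + qf (Zᵀ * S * Z) (α (t + 1) - α (t - d))) ≤ 0 := by
    have hsum := sum_nonpos fun t (_ : t ∈ range N) => hstep_le (α (t + 1) - α t)
    have hwin := hM.sum_qf_sub_delayed_le α d N
    simp only [← mul_sum, sum_add_distrib, sum_sub_distrib] at hsum ⊢
    linarith
  have htelescope := sum_range_sub' (fun t => 1 / 2 * qf C⁻¹ (xs - α t)) N
  have hdelay := sum_range_sub_delayed_le (E := fun s => 1 / 2 * qf S⁻¹ (ω s - w'))
    (fun s => mul_nonneg (by norm_num) (hS.inv.posSemidef.qf_nonneg _)) d N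
  have hsum := sum_le_sum fun t (_ : t ∈ range N) => hiter t
  simp only [sum_add_distrib] at hsum ⊢
  linarith [hC.inv.posSemidef.qf_nonneg (xs - α N)]

end Algorithm

theorem asyn_ddpg_ergodic_bound_general
    (n p : ℕ) (Z : Matrix (Fin p) (Fin n) ℝ)
    (C Hm : Matrix (Fin n) (Fin n) ℝ) (S : Matrix (Fin p) (Fin p) ℝ)
    (hC : C.PosDef) (hS : S.PosDef)
    (d : ℕ)
    (Hs Hr : (Fin n → ℝ) → ℝ) (gs : (Fin n → ℝ) → (Fin n → ℝ))
    (hconv_s : ∀ a b : Fin n → ℝ, Hs a + gs a ⬝ᵥ (b - a) ≤ Hs b)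
    (hsmooth : ∀ a b : Fin n → ℝ, Hs b ≤ Hs a + gs a ⬝ᵥ (b - a) + 1 / 2 * qf Hm (b - a))
    (hr : ConvexOn ℝ Set.univ Hr)
    (α : ℕ → Fin n → ℝ) (ω : ℕ → Fin p → ℝ)
    (hα : ∀ t : ℕ, ∀ v : Fin n → ℝ,
      Hr (α (t + 1)) + 1 / 2 * qf C⁻¹ (α (t + 1) -
          (α t - C *ᵥ (gs (α t) + Zᵀ *ᵥ ω (t - d) + (Zᵀ * S * Z) *ᵥ α (t - d))))
        ≤ Hr v + 1 / 2 * qf C⁻¹ (v -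
          (α t - C *ᵥ (gs (α t) + Zᵀ *ᵥ ω (t - d) + (Zᵀ * S * Z) *ᵥ α (t - d)))))
    (hω : ∀ t : ℕ, ω (t + 1) = ω (t - d) + (S * Z) *ᵥ α (t + 1))
    (hstep1 : (C⁻¹ - Hm - Zᵀ * (((1 + d : ℝ)) ^ 2 • S) * Z).PosSemidef)
    (κ : ℝ)
    (αs : Fin n → ℝ) (hαs : Z *ᵥ αs = 0) (ωs : Fin p → ℝ)
    (T : ℕ)
    (abar : Fin n → ℝ)
    (habar : abar = (T + 1 : ℝ)⁻¹ • ∑ t ∈ Finset.range (T + 1), α (t + 1)) :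
    (T + 1 : ℝ) * ((Hs abar + Hr abar) - (Hs αs + Hr αs)
        + 2 * Real.sqrt (ωs ⬝ᵥ ωs) * Real.sqrt ((Z *ᵥ abar) ⬝ᵥ (Z *ᵥ abar)))
      ≤ 4 * (1 + d : ℝ) * lamMax S⁻¹ * (ωs ⬝ᵥ ωs)
        + (1 + d : ℝ) * qf S⁻¹ (ω 0)
        + 1 / 2 * qf C⁻¹ (αs - α 0)
        + 4 * (d : ℝ) * κ ^ 2 / 2 := by
  obtain ⟨wh, hwh_sq, hwh_dot⟩ :=
    exists_dotProduct_self_le_and_dotProduct_eq (Z *ᵥ abar) (2 * √(ωs ⬝ᵥ ωs))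
  have hregret := ddpg_sum_le Z hC hS hconv_s hsmooth hr hα hω hstep1 hαs wh (T + 1)
  have hjensen := ((convexOn_univ_of_subgradient hconv_s).add hr).card_mul_map_avg_le
    (s := range (T + 1)) nonempty_range_add_one (fun t => α (t + 1))
  push_cast [card_range, ← habar, Pi.add_apply, sum_add_distrib] at hjensen
  have hpairing : ∑ t ∈ range (T + 1), (Z *ᵥ α (t + 1)) ⬝ᵥ wh
      = (T + 1) * (wh ⬝ᵥ (Z *ᵥ abar)) := by
    rw [← sum_dotProduct, ← mulVec_sum, habar, mulVec_smul, dotProduct_comm, dotProduct_smul,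
      smul_eq_mul, mul_inv_cancel_left₀ (by positivity)]
  have hdual : 1 / 2 * qf S⁻¹ (ω 0 - wh) ≤ qf S⁻¹ (ω 0) + 4 * lamMax S⁻¹ * (ωs ⬝ᵥ ωs) := by
    have hSi := hS.inv.posSemidef
    have hnorm := mul_le_mul_of_nonneg_left hwh_sq hSi.lamMax_nonneg
    rw [mul_pow, Real.sq_sqrt (by simpa using dotProduct_star_self_nonneg ωs)] at hnorm
    linarith [hSi.qf_sub_le (ω 0) wh, qf_le_lamMax_mul S⁻¹ wh]
  simp only [sum_add_distrib, sum_sub_distrib, sum_const, card_range, nsmul_eq_mul,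
    hpairing] at hregret
  push_cast at hregret
  rw [← hwh_dot]
  linarith [mul_le_mul_of_nonneg_left hdual (by positivity : (0 : ℝ) ≤ 1 + d),
    (by positivity : (0 : ℝ) ≤ 4 * d * κ ^ 2 / 2)]

/-- Theorem 1: ergodic bound for the Asyn-DDPG algorithm. -/
theorem asyn_ddpg_ergodic_bound
    (n p : ℕ) (Z : Matrix (Fin p) (Fin n) ℝ)
    (C Hm : Matrix (Fin n) (Fin n) ℝ) (S : Matrix (Fin p) (Fin p) ℝ)
    (hC : C.PosDef) (hHm : Hm.PosDef) (hS : S.PosDef)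
    (d : ℕ) (hd : 1 ≤ d)
    (Hs Hr : (Fin n → ℝ) → ℝ) (gs : (Fin n → ℝ) → (Fin n → ℝ))
    (hconv_s : ∀ a b : Fin n → ℝ, Hs a + gs a ⬝ᵥ (b - a) ≤ Hs b)
    (hsmooth : ∀ a b : Fin n → ℝ, Hs b ≤ Hs a + gs a ⬝ᵥ (b - a) + 1 / 2 * qf Hm (b - a))
    (hr : ConvexOn ℝ Set.univ Hr)
    (α : ℕ → Fin n → ℝ) (ω : ℕ → Fin p → ℝ)
    (hα : ∀ t : ℕ, ∀ v : Fin n → ℝ,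
      Hr (α (t + 1)) + 1 / 2 * qf C⁻¹ (α (t + 1) -
          (α t - C *ᵥ (gs (α t) + Zᵀ *ᵥ ω (t - d) + (Zᵀ * S * Z) *ᵥ α (t - d))))
        ≤ Hr v + 1 / 2 * qf C⁻¹ (v -
          (α t - C *ᵥ (gs (α t) + Zᵀ *ᵥ ω (t - d) + (Zᵀ * S * Z) *ᵥ α (t - d)))))
    (hω : ∀ t : ℕ, ω (t + 1) = ω (t - d) + (S * Z) *ᵥ α (t + 1))
    (hstep1 : (C⁻¹ - Hm - Zᵀ * (((1 + d : ℝ)) ^ 2 • S) * Z).PosSemidef)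
    (hstep2 : (C⁻¹ - Zᵀ * S * Z).PosDef)
    (κ : ℝ) (hκ : 0 ≤ κ) (hbound : ∀ t : ℕ, qf (Zᵀ * S * Z) (α t) ≤ κ ^ 2)
    (αs : Fin n → ℝ) (hαs : Z *ᵥ αs = 0) (ωs : Fin p → ℝ)
    (T : ℕ) (hT : 2 * d + 1 ≤ T)
    (abar : Fin n → ℝ)
    (habar : abar = (T + 1 : ℝ)⁻¹ • ∑ t ∈ Finset.range (T + 1), α (t + 1)) :
    (T + 1 : ℝ) * ((Hs abar + Hr abar) - (Hs αs + Hr αs)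
        + 2 * Real.sqrt (ωs ⬝ᵥ ωs) * Real.sqrt ((Z *ᵥ abar) ⬝ᵥ (Z *ᵥ abar)))
      ≤ 4 * (1 + d : ℝ) * lamMax S⁻¹ * (ωs ⬝ᵥ ωs)
        + (1 + d : ℝ) * qf S⁻¹ (ω 0)
        + 1 / 2 * qf C⁻¹ (αs - α 0)
        + 4 * (d : ℝ) * κ ^ 2 / 2 :=
  asyn_ddpg_ergodic_bound_general n p Z C Hm S hC hS d Hs Hr gs hconv_s hsmooth hr α ω hα hω hstep1
    κ αs hαs ωs T abar habar
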